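/- Let G be a topological group acting continuously and properly on a locally compact Hausdorff space M. Then any two distinct orbits can be separated by a continuous invariant function: if G·z ∩ G·z' = ∅, there exists a continuous G-invariant function f : M → ℝ with f(z) ≠ f(z'). -/

import Mathlib

/-!
The orbit space of a proper action is Hausdorff, and it is locally compact because the
quotient map is open. A locally compact Hausdorff space is completely regular (it embeds
in its one-point compactification, which is normal), so the classes of `z` and `z'` are
separated by a continuous function on the orbit space; pulled back to `M` it is invariant.
-/

open Topology

theorem t35Space_of_weaklyLocallyCompactSpace_of_t2Space (X : Type*) [TopologicalSpace X]
    [WeaklyLocallyCompactSpace X] [T2Space X] : T35Space X :=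
  OnePoint.isOpenEmbedding_coe.isEmbedding.t35Space

namespace MulAction

variable {G M : Type*} [Group G] [MulAction G M]

theorem orbitRel_quotient_mk_ne_of_disjoint_orbit {z z' : M}
    (h : Disjoint (orbit G z) (orbit G z')) :
    (⟦z⟧ : orbitRel.Quotient G M) ≠ ⟦z'⟧ := fun hzz' =>
  h.ne_of_mem (mem_orbit_self z) (Quotient.exact hzz') rfl

theorem exists_continuous_invariant_ne_of_disjoint_orbit [TopologicalSpace M]
    [T35Space (orbitRel.Quotient G M)] {z z' : M} (h : Disjoint (orbit G z) (orbit G z')) :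
    ∃ f : M → ℝ, Continuous f ∧ (∀ (g : G) (x : M), f (g • x) = f x) ∧ f z ≠ f z' := by
  obtain ⟨f, hf, hne⟩ :=
    separatesPoints_continuous_of_t35Space (orbitRel_quotient_mk_ne_of_disjoint_orbit h)
  exact ⟨fun x => f ⟦x⟧, hf.comp continuous_quotient_mk',
    fun _ _ => congrArg f orbitRel.Quotient.quotient_smul_eq, hne⟩

theorem t35Space_quotient_of_properSMul [TopologicalSpace G] [TopologicalSpace M]
    [LocallyCompactSpace M] [T2Space M] [ProperSMul G M] :
    T35Space (orbitRel.Quotient G M) :=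
  have : LocallyCompactSpace (orbitRel.Quotient G M) :=
    isOpenQuotientMap_quotientMk.locallyCompactSpace
  t35Space_of_weaklyLocallyCompactSpace_of_t2Space _

end MulAction

theorem proper_action_orbits_separated_by_invariant_functions_general
    {G M : Type*} [Group G] [TopologicalSpace G]
    [TopologicalSpace M] [LocallyCompactSpace M] [T2Space M]
    [MulAction G M]
    (hproper : IsProperMap (fun p : G × M => (p.1 • p.2, p.2)))
    (z z' : M) (hdisj : Disjoint (MulAction.orbit G z) (MulAction.orbit G z')) :
    ∃ f : M → ℝ, Continuous f ∧ (∀ (g : G) (x : M), f (g • x) = f x) ∧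
      f z ≠ f z' := by
  have : ProperSMul G M := ⟨hproper⟩
  have := MulAction.t35Space_quotient_of_properSMul (G := G) (M := M)
  exact MulAction.exists_continuous_invariant_ne_of_disjoint_orbit hdisj

theorem proper_action_orbits_separated_by_invariant_functions
    {G M : Type*} [Group G] [TopologicalSpace G] [IsTopologicalGroup G]
    [TopologicalSpace M] [LocallyCompactSpace M] [T2Space M]
    [MulAction G M] [ContinuousSMul G M]
    (hproper : IsProperMap (fun p : G × M => (p.1 • p.2, p.2)))
    (z z' : M) (hdisj : Disjoint (MulAction.orbit G z) (MulAction.orbit G z')) :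
    ∃ f : M → ℝ, Continuous f ∧ (∀ (g : G) (x : M), f (g • x) = f x) ∧
      f z ≠ f z' :=
  proper_action_orbits_separated_by_invariant_functions_general hproper z z' hdisj
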